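/- In the semigroup F generated by the automaton I, for all n ≥ 8 the relation f_{n-2} f_{n-5} f_n = f_n holds. -/

import Mathlib

/-!
Write `g_n` for the section of `f_n` at the letter `1`, so that `f_n = ⟨f_{n-1}, g_n⟩ζ` for
`n ≥ 2` and `g_n = g_{n-2} f_{n-2}` (products left to right). Comparing first letters, the
relation `f_{n-2} f_{n-5} f_n = f_n` follows on words `0w` from the same relation for `n - 1`,
and on words `1w` from `g_{n-2} f_{n-6} f_{n-1} = g_{n-2} f_{n-2}`. Every long enough value of
`g_{n-2}` begins with `n - 6` zeros, and `f_m` maps `0^i v` to `0^i f_{m-i}(v)` when `m - i ≥ 2`;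
so both sides send `0^{n-8} 00v` to `0^{n-6} f_4(v)`. Short words need no separate treatment,
because all these maps are synchronous: the first `m` letters of an image depend only on the
first `m` letters of the word.
-/

/-- The transformation of `{0,1}*` given by the state `s` of the automaton `I`:
it flips the first letter (`φ(s) = ⟨e,e⟩σ`).  Letters: `false = 0`, `true = 1`. -/
def sAct : List Bool → List Bool
  | [] => []
  | a :: w => (!a) :: w

/-- The transformation of `{0,1}*` given by the state `f` of the automaton `I`
(`φ(f) = ⟨s,f⟩ζ`): `0w ↦ 0·w^s` and `1w ↦ 0·w^f`. -/
def fAct : List Bool → List Bool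
  | [] => []
  | false :: w => false :: sAct w
  | true :: w => false :: fAct w

/-- The elements `f_n` of the semigroup: `f₁ = s`, `f₂ = f`,
`f_n = f_{n-2} f_{n-1}` (products written left-to-right). -/
def fA : ℕ → List Bool → List Bool
  | 0 => id
  | 1 => sAct
  | 2 => fAct
  | (n + 3) => fun w => fA (n + 2) (fA (n + 1) w)

/-- The left-to-right product `f_{i₁} f_{i₂} ⋯ f_{i_k}` of the elements `f_i`
along a list of indices. -/
def prodL (l : List ℕ) (w : List Bool) : List Bool :=
  l.foldl (fun v i => fA i v) w

/-- Membership in the semigroup `F` generated by `s` and `f`: `g` is a nonempty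
product of the generators (`false` stands for the generator `s`, `true` for `f`;
products are written left-to-right). -/
def inF (g : List Bool → List Bool) : Prop :=
  ∃ u : List Bool, u ≠ [] ∧
    (fun w => u.foldl (fun v a => if a then fAct v else sAct v) w) = g

section CommutesWithTake

variable {α β γ : Type*}

def CommutesWithTake (g : List α → List β) : Prop :=
  ∀ n w, g (w.take n) = (g w).take n

theorem CommutesWithTake.comp {g : List β → List γ} {h : List α → List β}
    (hg : CommutesWithTake g) (hh : CommutesWithTake h) : CommutesWithTake (g ∘ h) := by
  intro n w
  simp only [Function.comp, hh n w, hg n]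

theorem CommutesWithTake.eq_of_forall_le_length [Inhabited α] {g h : List α → List β}
    (hg : CommutesWithTake g) (hh : CommutesWithTake h) (N : ℕ)
    (heq : ∀ w, N ≤ w.length → g w = h w) (w : List α) : g w = h w := by
  have hpad : (w ++ List.replicate N default).take w.length = w := List.take_left' rfl
  rw [← hpad, hg, hh, heq _ (by simp)]

end CommutesWithTake

/-- `fSect n` is `g_{n+2}`, the section of `f_{n+2}` at the letter `1`. -/
def fSect : ℕ → List Bool → List Bool
  | 0 => fAct
  | 1 => sAct
  | (n + 2) => fun w => fA (n + 2) (fSect n w)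

theorem sAct_sAct (w : List Bool) : sAct (sAct w) = w := by
  cases w <;> simp [sAct]

theorem fAct_fAct_fAct (w : List Bool) : fAct (fAct (fAct w)) = fAct w := by
  cases w with
  | nil => rfl
  | cons a w => cases a <;> simp [fAct, sAct_sAct]

theorem fSect_three (w : List Bool) : fSect 3 w = fAct w :=
  congrArg fAct (sAct_sAct w)

theorem fSect_four (w : List Bool) : fSect 4 w = fA 4 w :=
  congrArg (fun v => fAct (sAct v)) (fAct_fAct_fAct w)

theorem sAct_length (w : List Bool) : (sAct w).length = w.length := by
  cases w <;> simp [sAct]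

theorem fAct_length (w : List Bool) : (fAct w).length = w.length := by
  induction w with
  | nil => rfl
  | cons a w ih => cases a <;> simp [fAct, sAct_length, ih]

theorem fA_length (n : ℕ) (w : List Bool) : (fA n w).length = w.length := by
  induction n using fA.induct generalizing w with
  | case1 => rfl
  | case2 => exact sAct_length w
  | case3 => exact fAct_length w
  | case4 n ih₂ ih₁ => exact (ih₂ _).trans (ih₁ w)

theorem fSect_length (n : ℕ) (w : List Bool) : (fSect n w).length = w.length := by
  induction n using fSect.induct generalizing w with
  | case1 => exact fAct_length w
  | case2 => exact sAct_length w
  | case3 n ih => exact (fA_length _ _).trans (ih w)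

theorem fA_nil (n : ℕ) : fA n [] = [] :=
  List.eq_nil_of_length_eq_zero (fA_length n [])

theorem commutesWithTake_sAct : CommutesWithTake sAct := by
  rintro (_ | n) (_ | ⟨a, w⟩) <;> rfl

theorem commutesWithTake_fAct : CommutesWithTake fAct := by
  intro n w
  induction w generalizing n with
  | nil => simp [fAct]
  | cons a w ih =>
    cases n with
    | zero => rfl
    | succ n => cases a <;> simp [fAct, ih, commutesWithTake_sAct n w]

theorem commutesWithTake_fA (n : ℕ) : CommutesWithTake (fA n) := by
  induction n using fA.induct with
  | case1 => intro _ _; rfl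
  | case2 => exact commutesWithTake_sAct
  | case3 => exact commutesWithTake_fAct
  | case4 n ih₂ ih₁ => exact ih₂.comp ih₁

theorem commutesWithTake_fSect (n : ℕ) : CommutesWithTake (fSect n) := by
  induction n using fSect.induct with
  | case1 => exact commutesWithTake_fAct
  | case2 => exact commutesWithTake_sAct
  | case3 n ih => exact (commutesWithTake_fA _).comp ih

theorem fA_cons (n : ℕ) (a : Bool) (w : List Bool) :
    fA (n + 2) (a :: w) = false :: if a then fSect n w else fA (n + 1) w := by
  induction n using Nat.twoStepInduction generalizing a w with
  | zero => cases a <;> rfl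
  | one => cases a <;> rfl
  | more n ih₀ ih₁ =>
    show fA (n + 1 + 2) (fA (n + 2) (a :: w)) = _
    rw [ih₀, ih₁]
    cases a <;> rfl

@[simp]
theorem fA_cons_false (n : ℕ) (w : List Bool) : fA (n + 2) (false :: w) = false :: fA (n + 1) w :=
  fA_cons n false w

@[simp]
theorem fA_cons_true (n : ℕ) (w : List Bool) : fA (n + 2) (true :: w) = false :: fSect n w :=
  fA_cons n true w

theorem fA_replicate_false_append (j : ℕ) {n : ℕ} (hn : 2 ≤ n) (v : List Bool) :
    fA (j + n) (List.replicate j false ++ v) = List.replicate j false ++ fA n v := by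
  obtain ⟨n, rfl⟩ := Nat.exists_eq_add_of_le' hn
  induction j with
  | zero => simp
  | succ j ih =>
    rw [show j + 1 + (n + 2) = j + n + 1 + 2 by omega, List.replicate_succ, List.cons_append,
      fA_cons_false, show j + n + 1 + 1 = j + (n + 2) by omega, ih, List.cons_append]

theorem replicate_two_prefix_fA_four (v : List Bool) (hv : 2 ≤ v.length) :
    List.replicate 2 false <+: fA 4 v := by
  match v, hv with
  | a :: b :: v, _ => cases a <;> cases b <;> exact ⟨_, rfl⟩

theorem replicate_false_prefix_fSect (m : ℕ) (w : List Bool) (hw : m + 1 ≤ w.length) :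
    List.replicate (m + 1) false <+: fSect (m + 3) w := by
  induction m using Nat.twoStepInduction generalizing w with
  | zero =>
    obtain ⟨a, w, rfl⟩ := List.exists_cons_of_length_pos hw
    rw [fSect_three]
    cases a <;> exact ⟨_, rfl⟩
  | one => exact fSect_four w ▸ replicate_two_prefix_fA_four w hw
  | more m ih _ =>
    obtain ⟨v, hv⟩ := ih w (by omega)
    have hvlen : 2 ≤ v.length := by
      have := congrArg List.length hv
      simp only [List.length_append, List.length_replicate, fSect_length] at this
      omega
    obtain ⟨u, hu⟩ := replicate_two_prefix_fA_four v hvlen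
    refine ⟨u, ?_⟩
    show _ = fA (m + 1 + 4) (fSect (m + 3) w)
    rw [← hv, fA_replicate_false_append (m + 1) (by norm_num), ← hu, ← List.append_assoc,
      ← List.replicate_add]

theorem fSect_absorb (k : ℕ) (w : List Bool) :
    fA (k + 7) (fA (k + 2) (fSect (k + 4) w)) = fA (k + 6) (fSect (k + 4) w) := by
  have hL := (commutesWithTake_fA (k + 7)).comp
    ((commutesWithTake_fA (k + 2)).comp (commutesWithTake_fSect (k + 4)))
  have hR := (commutesWithTake_fA (k + 6)).comp (commutesWithTake_fSect (k + 4))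
  refine hL.eq_of_forall_le_length hR (k + 2) (fun w hw => ?_) w
  obtain ⟨v, hv⟩ := replicate_false_prefix_fSect (k + 1) w hw
  have hsplit : List.replicate (k + 1 + 1) false ++ v
      = List.replicate k false ++ false :: false :: v := by
    simp [List.replicate_succ']
  simp only [Function.comp_apply]
  rw [← hv, hsplit, fA_replicate_false_append k (le_refl 2),
    fA_replicate_false_append k (by norm_num), fA_replicate_false_append k (by norm_num)]
  congr 1
  show fA 7 (false :: true :: v) = false :: fA 5 (false :: v)
  simp [fSect_four]

theorem fA_six_sAct_fAct (u : List Bool) : fA 6 (sAct (fAct u)) = fA 5 (fAct u) := by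
  cases u with
  | nil => rfl
  | cons a w => cases a <;> simp [fAct, sAct, fSect_four]

theorem fA_absorb (k : ℕ) (w : List Bool) :
    fA (k + 6) (fA (k + 1) (fA (k + 4) w)) = fA (k + 6) w := by
  induction k using Nat.twoStepInduction generalizing w with
  | zero =>
    obtain _ | ⟨a, w⟩ := w
    · simp only [fA_nil]
    show fA 6 (sAct (fA 4 (a :: w))) = fA 6 (a :: w)
    rw [fA_cons 2, fA_cons 4]
    show false :: fSect 4 _ = _
    rw [fSect_four]
    cases a <;> rfl
  | one =>
    obtain _ | ⟨a, w⟩ := w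
    · simp only [fA_nil]
    show fA 7 (fAct (fA 5 (a :: w))) = fA 7 (a :: w)
    rw [fA_cons 3, fA_cons 5]
    show false :: fA 6 (sAct _) = _
    cases a with
    | false => exact congrArg (false :: ·) (fA_six_sAct_fAct (sAct (fAct w)))
    | true =>
      show false :: fA 6 (sAct (fSect 3 w)) = false :: fA 5 (fSect 3 w)
      rw [fSect_three, fA_six_sAct_fAct]
  | more k _ ih =>
    obtain _ | ⟨a, w⟩ := w
    · simp only [fA_nil]
    show fA (k + 8) (fA (k + 3) (fA (k + 6) (a :: w))) = fA (k + 8) (a :: w)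
    rw [fA_cons (k + 4), fA_cons_false (k + 1), fA_cons_false (k + 6), fA_cons (k + 6)]
    cases a with
    | false => exact congrArg (false :: ·) (ih w)
    | true => exact congrArg (false :: ·) (fSect_absorb k w)

/-- In `F`, for all `n ≥ 8` the relation `f_{n-2} f_{n-5} f_n = f_n` holds
(products written left-to-right). -/
theorem fn_absorb (n : ℕ) (hn : 8 ≤ n) :
    ∀ w : List Bool, fA n (fA (n - 5) (fA (n - 2) w)) = fA n w := by
  obtain ⟨k, rfl⟩ : ∃ k, n = k + 6 := ⟨n - 6, by omega⟩
  simpa using fA_absorb k
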